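/- arXiv:2306.10016 — 2 statements merged into one kernel-verified Lean document; each statement's English description precedes it below -/
import Mathlib

section
/- Let m, p, q be positive natural numbers with p ≤ q, set L = pm and M = qm, and let f : {0,…,M−1} → ℂ satisfy f_j = 0 for all j ≥ L. Define F_k = Σ_{j=0}^{M−1} ζ_M^{kj} f_j. Then for all ℓ with 0 ≤ ℓ ≤ m−1 and all r with 0 ≤ r ≤ q−1, F_{qℓ+r} = Σ_{s=0}^{m−1} ζ_m^{ℓs} ζ_{qm}^{rs} ( Σ_{t=0}^{p−1} ζ_q^{rt} f_{tm+s} ). In particular, the DFT of the implicitly zero-padded array can be computed as q DFTs of size m with pre-processing, without explicit zero padding. -/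
open Finset Complex

noncomputable def zeta (M : ℕ) : ℂ := Complex.exp (2 * Real.pi * Complex.I / M)

lemma zeta_pow (N a : ℕ) : zeta N ^ a = Complex.exp (2 * Real.pi * Complex.I * a / N) := by
  rw [zeta, ← Complex.exp_nat_mul]
  ring_nf

/-- Implicit dealiasing of the forward transform: if `L = p·m`, `M = q·m` and
`f_j = 0` for `j ≥ L`, then the DFT residues satisfy
`F_{qℓ+r} = Σ_{s<m} ζ_m^{ℓs} ζ_{qm}^{rs} Σ_{t<p} ζ_q^{rt} f_{tm+s}`,
so the padded DFT is `q` DFTs of size `m` with pre-processing and no explicit zero padding. -/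
theorem implicit_dealias_forward (m p q L M : ℕ)
    (hm : 0 < m) (hp : 0 < p) (hq : 0 < q) (hpq : p ≤ q)
    (hL : L = p * m) (hM : M = q * m)
    (f : ℕ → ℂ) (hf : ∀ j, L ≤ j → f j = 0)
    (F : ℕ → ℂ)
    (hF : ∀ k, F k = ∑ j ∈ Finset.range M, zeta M ^ (k * j) * f j) :
    ∀ ℓ, ℓ ≤ m - 1 → ∀ r, r ≤ q - 1 →
      F (q * ℓ + r) =
        ∑ s ∈ Finset.range m, zeta m ^ (ℓ * s) * zeta (q * m) ^ (r * s) *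
          (∑ t ∈ Finset.range p, zeta q ^ (r * t) * f (t * m + s)) := by
  intro ℓ hℓ r hr
  subst hL hM
  have hLM : p * m ≤ q * m := Nat.mul_le_mul_right m hpq
  rw [hF]
  rw [← Finset.sum_subset (Finset.range_subset_range.2 hLM) (by
    intro j hj hj'
    rw [hf j (by simpa using hj'), mul_zero])]
  have hsplit :
      ∑ x ∈ range (p * m), zeta (q * m) ^ ((q * ℓ + r) * x) * f x =
      ∑ ts ∈ range m ×ˢ range p,
        zeta (q * m) ^ ((q * ℓ + r) * (ts.2 * m + ts.1)) * f (ts.2 * m + ts.1) := by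
    apply Finset.sum_nbij' (i := fun x => (x % m, x / m)) (j := fun ts => ts.2 * m + ts.1)
    · intro a ha
      simp only [Finset.mem_product, Finset.mem_range] at *
      exact ⟨Nat.mod_lt _ hm, Nat.div_lt_iff_lt_mul hm |>.2 (by linarith [ha])⟩
    · intro a ha
      simp only [Finset.mem_product, Finset.mem_range] at *
      have := ha.1; have := ha.2
      calc a.2 * m + a.1 < a.2 * m + m := by omega
        _ ≤ p * m := by nlinarith
    · intro a _
      show a / m * m + a % m = a
      exact Nat.div_add_mod' a m
    · intro a ha
      simp only [Finset.mem_product, Finset.mem_range] at ha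
      have h1 : (a.2 * m + a.1) % m = a.1 := by
        rw [add_comm, Nat.add_mul_mod_self_right]; exact Nat.mod_eq_of_lt ha.1
      have h2 : (a.2 * m + a.1) / m = a.2 := by
        rw [add_comm, Nat.add_mul_div_right _ _ hm, Nat.div_eq_of_lt ha.1, zero_add]
      simp [h1, h2]
    · intro a ha
      have h : a / m * m + a % m = a := Nat.div_add_mod' a m
      simp only [h]
  rw [hsplit, Finset.sum_product]
  apply Finset.sum_congr rfl
  intro s hs
  rw [Finset.mul_sum]
  apply Finset.sum_congr rfl
  intro t ht
  simp only [Finset.mem_range] at hs ht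
  rw [zeta_pow, zeta_pow, zeta_pow, zeta_pow, ← Complex.exp_add, ← mul_assoc, ← Complex.exp_add]
  congr 1
  rw [Complex.exp_eq_exp_iff_exists_int]
  refine ⟨ℓ * t, ?_⟩
  have hm' : (m : ℂ) ≠ 0 := Nat.cast_ne_zero.2 hm.ne'
  have hq' : (q : ℂ) ≠ 0 := Nat.cast_ne_zero.2 hq.ne'
  push_cast
  field_simp
  ring
end

section
/- Let α ≥ 1 and L_1, L_2 be positive natural numbers with L_2 = 2^{α−1} L_1, and set M = 2 L_2 = 2^α L_1. Let f, g : {0,…,M−1} → ℂ satisfy f_j = 0 for all j ≥ L_1 and g_j = 0 for all j ≥ L_2. Define F_k = Σ_{j=0}^{M−1} ζ_M^{kj} f_j, G_k = Σ_{j=0}^{M−1} ζ_M^{kj} g_j, and H_k = F_k · G_k for 0 ≤ k ≤ M−1. Then for every k with 0 ≤ k ≤ M−1, Σ_{j=0}^{L_2−1} ζ_{L_2}^{−kj} H_{2j} + ζ_M^{−k} Σ_{j=0}^{L_2−1} ζ_{L_2}^{−kj} H_{2j+1} = M Σ_{p=0}^{k} f_p g_{k−p}. That is, the two-residue hybrid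 dealiasing algorithm computes M times the exact linear convolution of f and g, with no aliasing errors. -/
open Finset Complex

private lemma sum_even_odd (n : ℕ) (c : ℕ → ℂ) :
    ∑ m ∈ Finset.range (2 * n), c m =
      ∑ j ∈ Finset.range n, c (2 * j) + ∑ j ∈ Finset.range n, c (2 * j + 1) := by
  induction n with
  | zero => simp
  | succ n ih =>
    rw [show 2 * (n + 1) = 2 * n + 1 + 1 by ring, Finset.sum_range_succ, Finset.sum_range_succ,
      ih, Finset.sum_range_succ, Finset.sum_range_succ]
    ring

/-- The two-residue powers-of-two hybrid dealiasing algorithm computes `M` times the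
exact linear convolution: with `L₂ = 2^{α−1} L₁`, `M = 2L₂ = 2^α L₁`, inputs supported
on their first `L₁` and `L₂` entries, and `H = F·G` the pointwise product of the DFTs,
`Σ_{j<L₂} ζ_{L₂}^{-kj} H_{2j} + ζ_M^{-k} Σ_{j<L₂} ζ_{L₂}^{-kj} H_{2j+1}
  = M Σ_{p=0}^{k} f_p g_{k-p}`. -/
theorem hybrid_powers_of_two_convolution (α L₁ L₂ M : ℕ)
    (hα : 1 ≤ α) (hL₁ : 0 < L₁) (hL₂ : 0 < L₂)
    (hL₂eq : L₂ = 2 ^ (α - 1) * L₁) (hM : M = 2 * L₂)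
    (f g : ℕ → ℂ)
    (hf : ∀ j, L₁ ≤ j → f j = 0) (hg : ∀ j, L₂ ≤ j → g j = 0)
    (F G H : ℕ → ℂ)
    (hF : ∀ k, F k = ∑ j ∈ Finset.range M, zeta M ^ (k * j) * f j)
    (hG : ∀ k, G k = ∑ j ∈ Finset.range M, zeta M ^ (k * j) * g j)
    (hH : ∀ k, k ≤ M - 1 → H k = F k * G k) :
    ∀ k, k ≤ M - 1 →
      (∑ j ∈ Finset.range L₂, zeta L₂ ^ (-(k * j : ℤ)) * H (2 * j)) +
          zeta M ^ (-(k : ℤ)) *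
            ∑ j ∈ Finset.range L₂, zeta L₂ ^ (-(k * j : ℤ)) * H (2 * j + 1) =
        (M : ℂ) * ∑ p ∈ Finset.range (k + 1), f p * g (k - p) := by
  intro k hk
  have hM0 : 0 < M := by omega
  have hkM : k < M := by omega
  have hL₁₂ : L₁ ≤ L₂ := by
    rw [hL₂eq]
    exact Nat.le_mul_of_pos_left _ (Nat.pow_pos (by norm_num))
  set ζ := zeta M with hζdef
  have hζ0 : ζ ≠ 0 := Complex.exp_ne_zero _
  have hprim : IsPrimitiveRoot ζ M := Complex.isPrimitiveRoot_exp M hM0.ne'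
  have hzadd : ∀ a b : ℤ, ζ ^ a * ζ ^ b = ζ ^ (a + b) := fun a b => (zpow_add₀ hζ0 a b).symm
  -- geometric sum of roots of unity
  have hS : ∀ n : ℤ, (∑ m ∈ Finset.range M, ζ ^ (n * m)) = if (M : ℤ) ∣ n then (M : ℂ) else 0 := by
    intro n
    by_cases h : (M : ℤ) ∣ n
    · rw [if_pos h]
      have h1 : ζ ^ n = 1 := (hprim.zpow_eq_one_iff_dvd n).mpr h
      calc ∑ m ∈ Finset.range M, ζ ^ (n * m)
          = ∑ m ∈ Finset.range M, (1 : ℂ) := by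
            refine Finset.sum_congr rfl fun m _ => ?_
            rw [zpow_mul, h1, one_zpow]
        _ = M := by simp
    · rw [if_neg h]
      have h1 : ζ ^ n ≠ 1 := fun he => h ((hprim.zpow_eq_one_iff_dvd n).mp he)
      calc ∑ m ∈ Finset.range M, ζ ^ (n * m)
          = ∑ m ∈ Finset.range M, (ζ ^ n) ^ m := by
            refine Finset.sum_congr rfl fun m _ => ?_
            rw [zpow_mul, zpow_natCast]
        _ = ((ζ ^ n) ^ M - 1) / (ζ ^ n - 1) := geom_sum_eq h1 M
        _ = 0 := by
            rw [← zpow_natCast (ζ ^ n) M, ← zpow_mul, mul_comm, zpow_mul, hprim.zpow_eq_one,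
              one_zpow]
            simp
  -- relation between the two roots of unity
  have hzL : zeta L₂ = ζ ^ (2 : ℕ) := by
    rw [hζdef, zeta, zeta, ← Complex.exp_nat_mul]
    congr 1
    have hL2C : (L₂ : ℂ) ≠ 0 := Nat.cast_ne_zero.2 hL₂.ne'
    have hMC : (M : ℂ) = 2 * L₂ := by rw [hM]; push_cast; ring
    rw [hMC]
    field_simp
    ring
  have hzLpow : ∀ a : ℤ, zeta L₂ ^ a = ζ ^ (2 * a) := by
    intro a
    rw [hzL, ← zpow_natCast ζ 2, ← zpow_mul]
    norm_num
  -- merge the two sums into one inverse DFT of size M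
  have hmerge :
      (∑ j ∈ Finset.range L₂, zeta L₂ ^ (-(k * j : ℤ)) * H (2 * j)) +
          ζ ^ (-(k : ℤ)) *
            ∑ j ∈ Finset.range L₂, zeta L₂ ^ (-(k * j : ℤ)) * H (2 * j + 1) =
        ∑ m ∈ Finset.range M, ζ ^ (-(k * m : ℤ)) * H m := by
    rw [hM, sum_even_odd L₂ (fun m => ζ ^ (-(k * m : ℤ)) * H m)]
    congr 1
    · refine Finset.sum_congr rfl fun j _ => ?_
      rw [hzLpow]
      congr 2
      push_cast; ring
    · rw [Finset.mul_sum]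
      refine Finset.sum_congr rfl fun j _ => ?_
      rw [hzLpow, ← mul_assoc, hzadd]
      congr 2
      push_cast; ring
  rw [hmerge]
  -- expand H and reorder sums
  have hexp1 : ∑ m ∈ Finset.range M, ζ ^ (-(k * m : ℤ)) * H m =
      ∑ m ∈ Finset.range M, ∑ p ∈ Finset.range M, ∑ q ∈ Finset.range M,
        f p * g q * ζ ^ (((p : ℤ) + q - k) * m) := by
    refine Finset.sum_congr rfl fun m hm => ?_
    have hmM : m ≤ M - 1 := by
      have := Finset.mem_range.mp hm; omega
    rw [hH m hmM, hF, hG, Finset.sum_mul_sum, Finset.mul_sum]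
    refine Finset.sum_congr rfl fun p _ => ?_
    rw [Finset.mul_sum]
    apply Finset.sum_congr rfl
    intro q _
    rw [← zpow_natCast ζ (m * p), ← zpow_natCast ζ (m * q)]
    calc ζ ^ (-(k * m : ℤ)) * (ζ ^ (m * p : ℤ) * f p * (ζ ^ (m * q : ℤ) * g q))
        = f p * g q * (ζ ^ (-(k * m : ℤ)) * ζ ^ (m * p : ℤ) * ζ ^ (m * q : ℤ)) := by ring
      _ = f p * g q * ζ ^ (((p : ℤ) + q - k) * m) := by
          rw [hzadd, hzadd]
          congr 1
          push_cast; ring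
  have hexp : ∑ m ∈ Finset.range M, ζ ^ (-(k * m : ℤ)) * H m =
      ∑ p ∈ Finset.range M, ∑ q ∈ Finset.range M,
        f p * g q * ∑ m ∈ Finset.range M, ζ ^ (((p : ℤ) + q - k) * m) := by
    rw [hexp1, Finset.sum_comm]
    refine Finset.sum_congr rfl fun p _ => ?_
    rw [Finset.sum_comm]
    refine Finset.sum_congr rfl fun q _ => ?_
    rw [Finset.mul_sum]
  rw [hexp]
  -- evaluate the inner geometric sums
  have hstep : ∀ p ∈ Finset.range M, ∀ q ∈ Finset.range M,
      f p * g q * (∑ m ∈ Finset.range M, ζ ^ (((p : ℤ) + q - k) * m)) =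
        f p * g q * (if p + q = k then (M : ℂ) else 0) := by
    intro p hp q hq
    by_cases hfp : L₁ ≤ p
    · simp [hf p hfp]
    by_cases hgq : L₂ ≤ q
    · simp [hg q hgq]
    push_neg at hfp hgq
    rw [hS]
    congr 1
    have hiff : (M : ℤ) ∣ ((p : ℤ) + q - k) ↔ p + q = k := by
      constructor
      · rintro ⟨c, hc⟩
        have hb1 : (M : ℤ) * c < M * 1 := by
          rw [mul_one, ← hc]; omega
        have hb2 : (M : ℤ) * (-1) < M * c := by
          rw [← hc]; omega
        have hMZ : (0 : ℤ) < M := by exact_mod_cast hM0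
        have hc1 : c < 1 := lt_of_mul_lt_mul_left hb1 hMZ.le
        have hc2 : (-1 : ℤ) < c := lt_of_mul_lt_mul_left hb2 hMZ.le
        have hc0 : c = 0 := by omega
        rw [hc0, mul_zero] at hc
        omega
      · intro h
        refine ⟨0, ?_⟩
        rw [mul_zero]
        omega
    simp only [hiff]
  rw [Finset.sum_congr rfl (fun p hp => Finset.sum_congr rfl (hstep p hp))]
  -- collapse the indicator sums
  have hinner : ∀ p ∈ Finset.range M,
      (∑ q ∈ Finset.range M, f p * g q * (if p + q = k then (M : ℂ) else 0)) =
        if p ≤ k then f p * g (k - p) * M else 0 := by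
    intro p _
    by_cases hpk : p ≤ k
    · rw [if_pos hpk]
      have hcongr : ∀ q ∈ Finset.range M,
          f p * g q * (if p + q = k then (M : ℂ) else 0) =
            if q = k - p then f p * g q * M else 0 := by
        intro q _
        by_cases h : p + q = k
        · rw [if_pos h, if_pos (by omega)]
        · rw [if_neg h, if_neg (by omega), mul_zero]
      rw [Finset.sum_congr rfl hcongr, Finset.sum_ite_eq' (Finset.range M) (k - p),
        if_pos (Finset.mem_range.mpr (by omega))]
    · rw [if_neg hpk]
      refine Finset.sum_eq_zero fun q _ => ?_
      rw [if_neg (by omega), mul_zero]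
  rw [Finset.sum_congr rfl hinner]
  rw [← Finset.sum_filter]
  have hfilter : (Finset.range M).filter (· ≤ k) = Finset.range (k + 1) := by
    ext x
    simp only [Finset.mem_filter, Finset.mem_range]
    omega
  rw [hfilter, Finset.mul_sum]
  exact Finset.sum_congr rfl fun p _ => by ring
end
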